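/- For all positive integers γ and δ there exists a constant C > 0 such that for every integer N ≥ 2 there exist (γ,δ)-free sets S_1, S_2, …, S_c ⊆ {1,2,…,N} with c ≤ 2^{C·√(log₂ N)} and S_1 ∪ S_2 ∪ ⋯ ∪ S_c = {1,2,…,N}. -/

import Mathlib

/-!
Behrend's construction, with weights: the integer points of a sphere in the box `[0, d)ⁿ` contain
no nontrivial solution of `γ x + δ y = (γ + δ) z`, by strict convexity of the Euclidean ball, and
reading them as base-`D` digits with `(γ + δ)(d - 1) < D` creates no carries, so their image is a
`(γ,δ)`-free subset of `[1, Dⁿ]`. Taking `n ≈ √(log₂ N)` and `D ≈ N^(1/n)` gives a free set of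
density `2^(-O(√(log N)))` in `[1, N]`. Every point of `[1, N]` lies in equally many of the `2N - 1`
relevant translates of it, so greedily chosen translates each cover a `2^(-O(√(log N)))` fraction
of what is still uncovered, and `2^(O(√(log N)))` of them cover `[1, N]`.
-/

open Finset

/-- A set `X` of integers is `(γ,δ)`-free if no three distinct elements `a, b, c ∈ X`
satisfy `γ·a + δ·b = (γ+δ)·c`. -/
def IsFree (γ δ : ℤ) (X : Set ℤ) : Prop :=
  ¬ ∃ a ∈ X, ∃ b ∈ X, ∃ c ∈ X, a ≠ b ∧ a ≠ c ∧ b ≠ c ∧ γ * a + δ * b = (γ + δ) * c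

theorem IsFree.mono {γ δ : ℤ} {X Y : Set ℤ} (hX : IsFree γ δ X) (h : Y ⊆ X) : IsFree γ δ Y :=
  fun ⟨a, ha, b, hb, c, hc, habc⟩ => hX ⟨a, h ha, b, h hb, c, h hc, habc⟩

theorem IsFree.image_add_const {γ δ : ℤ} {X : Set ℤ} (hX : IsFree γ δ X) (t : ℤ) :
    IsFree γ δ ((· + t) '' X) := by
  rintro ⟨_, ⟨a, ha, rfl⟩, _, ⟨b, hb, rfl⟩, _, ⟨c, hc, rfl⟩, hab, hac, hbc, h⟩
  refine hX ⟨a, ha, b, hb, c, hc, ?_, ?_, ?_, by linear_combination h⟩ <;> rintro rfl <;> simp_all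

theorem eq_of_norm_eq_of_smul_add_smul_eq {E : Type*} [NormedAddCommGroup E] [NormedSpace ℝ E]
    [StrictConvexSpace ℝ E] {a b r : ℝ} (ha : 0 < a) (hb : 0 < b) {x y z : E} (hx : ‖x‖ = r)
    (hy : ‖y‖ = r) (hz : ‖z‖ = r) (h : a • x + b • y = (a + b) • z) : x = y := by
  by_contra hxy
  have hab : 0 < a + b := add_pos ha hb
  have hcombo : (a / (a + b)) • x + (b / (a + b)) • y = z := by
    rw [div_eq_inv_mul, div_eq_inv_mul, mul_smul, mul_smul, ← smul_add, h, smul_smul,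
      inv_mul_cancel₀ hab.ne', one_smul]
  have := norm_combo_lt_of_ne hx.le hy.le hxy (div_pos ha hab) (div_pos hb hab)
    (by rw [← add_div, div_self hab.ne'])
  rw [hcombo, hz] at this
  exact lt_irrefl r this

namespace Behrend

variable {n d k D g e : ℕ}

theorem eq_of_mem_sphere_of_smul_add_smul_eq (hg : 0 < g) (he : 0 < e) {x y z : Fin n → ℕ}
    (hx : x ∈ sphere n d k) (hy : y ∈ sphere n d k) (hz : z ∈ sphere n d k)
    (h : g • x + e • y = (g + e) • z) : x = y := by
  let ι : (Fin n → ℕ) → EuclideanSpace ℝ (Fin n) := fun v => WithLp.toLp 2 ((↑) ∘ v)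
  have hι : ι x = ι y := by
    refine eq_of_norm_eq_of_smul_add_smul_eq (Nat.cast_pos.2 hg) (Nat.cast_pos.2 he)
      (norm_of_mem_sphere hx) (norm_of_mem_sphere hy) (norm_of_mem_sphere hz) ?_
    ext i
    simpa [ι] using congr_arg (fun v : Fin n → ℕ => (v i : ℝ)) h
  funext i
  simpa [ι] using congr_arg (· i) hι

theorem map_lt_pow {x : Fin n → ℕ} (hx : ∀ i, x i < D) : map D x < D ^ n := by
  cases D with
  | zero =>
    cases n with
    | zero => simp
    | succ n => exact absurd (hx 0) (Nat.not_lt_zero _)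
  | succ D =>
    calc map (D + 1) x ≤ ∑ i : Fin n, D * (D + 1) ^ (i : ℕ) :=
          map_monotone _ fun i => Nat.le_of_lt_succ (hx i)
      _ < (D + 1) ^ n := by
        rw [Fin.sum_univ_eq_sum_range (fun i => D * (D + 1) ^ i), ← Finset.mul_sum, mul_comm,
          ← geom_sum_mul_add D n]
        omega

theorem smul_add_smul_eq_of_map_eq (hd : (g + e) * (d - 1) < D) {x y z : Fin n → ℕ}
    (hx : ∀ i, x i < d) (hy : ∀ i, y i < d) (hz : ∀ i, z i < d)
    (h : g * map D x + e * map D y = (g + e) * map D z) : g • x + e • y = (g + e) • z := by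
  have hxy : ∀ i, (g • x + e • y) i < D := fun i => by
    have := Nat.le_sub_one_of_lt (hx i); have := Nat.le_sub_one_of_lt (hy i)
    simp only [Pi.add_apply, Pi.smul_apply, smul_eq_mul]
    nlinarith
  have hz' : ∀ i, ((g + e) • z) i < D := fun i => by
    have := Nat.le_sub_one_of_lt (hz i)
    simp only [Pi.smul_apply, smul_eq_mul]
    nlinarith
  refine map_injOn hxy hz' ?_
  rwa [map_add, map_nsmul, map_nsmul, map_nsmul, smul_eq_mul, smul_eq_mul, smul_eq_mul]

theorem isFree_image_map_sphere (hg : 0 < g) (he : 0 < e) (hd : (g + e) * (d - 1) < D) :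
    IsFree g e ((sphere n d k).image fun x => (map D x : ℤ) : Set ℤ) := by
  rintro ⟨_, ha, _, hb, _, hc, hab, -, -, h⟩
  simp only [coe_image, Set.mem_image, mem_coe] at ha hb hc
  obtain ⟨x, hx, rfl⟩ := ha
  obtain ⟨y, hy, rfl⟩ := hb
  obtain ⟨z, hz, rfl⟩ := hc
  have hbox {v} (hv : v ∈ sphere n d k) := mem_box.1 (sphere_subset_box hv)
  have := smul_add_smul_eq_of_map_eq hd (hbox hx) (hbox hy) (hbox hz) (by exact_mod_cast h)
  rw [eq_of_mem_sphere_of_smul_add_smul_eq hg he hx hy hz this] at hab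
  exact hab rfl

theorem exists_isFree_subset_Icc_of_pow_le {N : ℕ} (hg : 0 < g) (he : 0 < e)
    (hd : (g + e) * (d - 1) < D) (hN : D ^ n ≤ N) :
    ∃ A : Finset ℤ, A ⊆ Icc 1 (N : ℤ) ∧ IsFree g e A ∧ d ^ n ≤ (n * (d - 1) ^ 2 + 1) * #A := by
  obtain ⟨k, -, hk⟩ := exists_large_sphere_aux n d
  set B := (sphere n d k).image fun x => (map D x : ℤ)
  have hdD : d ≤ D := by
    have : d - 1 ≤ (g + e) * (d - 1) := Nat.le_mul_of_pos_left _ (by omega)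
    omega
  refine ⟨B.image (· + 1), ?_, ?_, ?_⟩
  · intro a ha
    simp only [B, mem_image] at ha
    obtain ⟨_, ⟨x, hx, rfl⟩, rfl⟩ := ha
    have := map_lt_pow fun i => (mem_box.1 (sphere_subset_box hx) i).trans_le hdD
    rw [mem_Icc]
    omega
  · rw [coe_image]
    exact (isFree_image_map_sphere hg he hd).image_add_const 1
  · rw [card_image_of_injective _ (add_left_injective 1), card_image_of_injOn]
    · rw [div_le_iff₀ (by positivity)] at hk
      rw [mul_comm]
      exact_mod_cast hk
    · exact Nat.cast_injective.comp_injOn <| map_injOn.mono fun x hx i =>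
        (mem_box.1 (sphere_subset_box hx) i).trans_le hdD

end Behrend

theorem exists_isFree_subset_Icc_dense {g e N : ℕ} (hg : 0 < g) (he : 0 < e) (hN : N ≠ 0) :
    ∃ A : Finset ℤ, A ⊆ Icc 1 (N : ℤ) ∧ IsFree g e A ∧
      N ≤ 2 ^ ((g + e + 4) * (Nat.sqrt (Nat.log 2 N) + 1)) * #A := by
  set ℓ := Nat.log 2 N
  set n := Nat.sqrt ℓ + 1
  set w := g + e
  -- `Dⁿ ≤ N`, and `d` is the largest digit bound for which base `D` creates no carries.
  set D := 2 ^ (ℓ / n)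
  set d := (D - 1) / w + 1
  have hw : 0 < w := by omega
  have hD0 : 0 < D := by positivity
  have hdD : w * (d - 1) < D := by
    have := Nat.mul_div_le (D - 1) w
    simp only [d, Nat.add_sub_cancel]
    omega
  have hDn : D ^ n ≤ N := by
    rw [← pow_mul]
    exact (Nat.pow_le_pow_right two_pos (Nat.div_mul_le_self ℓ n)).trans (Nat.pow_log_le_self 2 hN)
  obtain ⟨A, hAN, hA, hcard⟩ := Behrend.exists_isFree_subset_Icc_of_pow_le hg he hdD hDn
  refine ⟨A, hAN, hA, ?_⟩
  have hDwd : D ≤ w * d := by have := Nat.lt_mul_div_succ (D - 1) hw; simp only [d]; omega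
  have hDn2 : D ≤ 2 ^ n :=
    Nat.pow_le_pow_right two_pos (Nat.div_lt_of_lt_mul (Nat.lt_succ_sqrt ℓ)).le
  have hsphere : n * (d - 1) ^ 2 + 1 ≤ 2 ^ (3 * n) := by
    have h1 : (d - 1) ^ 2 + 1 ≤ D ^ 2 := by
      have : d - 1 < D := (Nat.le_mul_of_pos_left _ hw).trans_lt hdD
      nlinarith
    calc n * (d - 1) ^ 2 + 1 ≤ n * ((d - 1) ^ 2 + 1) := by rw [mul_add_one]; omega
      _ ≤ 2 ^ n * (2 ^ n) ^ 2 := Nat.mul_le_mul n.lt_two_pow_self.le (by nlinarith)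
      _ = 2 ^ (3 * n) := by ring
  calc N ≤ 2 ^ (ℓ + 1) := (Nat.lt_pow_succ_log_self one_lt_two N).le
    _ ≤ 2 ^ ((ℓ / n + 1) * n) := by
      refine Nat.pow_le_pow_right two_pos ?_
      have := Nat.lt_div_mul_add (a := ℓ) (show 0 < n by omega)
      rw [add_one_mul]
      omega
    _ = (2 * D) ^ n := by rw [pow_mul, pow_succ' 2 (ℓ / n)]
    _ ≤ (2 * w) ^ n * d ^ n := by rw [← mul_pow, mul_assoc]; gcongr
    _ ≤ 2 ^ ((w + 1) * n) * (2 ^ (3 * n) * #A) := by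
      refine Nat.mul_le_mul ?_ ?_
      · rw [pow_mul, pow_succ' 2 w]
        exact Nat.pow_le_pow_left (by linarith [w.lt_two_pow_self]) n
      · exact hcard.trans (Nat.mul_le_mul_right _ hsphere)
    _ = 2 ^ ((w + 4) * n) * #A := by ring

section Covering

variable {ι α : Type*} {r : ι → α → Prop} [∀ t u, Decidable (r t u)]
  {T₀ : Finset ι} {U : Finset α} {a : ℕ}

theorem exists_mul_card_le_card_mul_card_filter (hT₀ : T₀.Nonempty)
    (h : ∀ u ∈ U, a ≤ #{t ∈ T₀ | r t u}) : ∃ t ∈ T₀, a * #U ≤ #T₀ * #{u ∈ U | r t u} := by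
  refine exists_le_of_sum_le hT₀ ?_
  rw [sum_const, ← mul_sum, smul_eq_mul]
  gcongr
  calc a * #U = ∑ _u ∈ U, a := by rw [sum_const, smul_eq_mul, mul_comm]
    _ ≤ ∑ u ∈ U, #{t ∈ T₀ | r t u} := sum_le_sum h
    _ = ∑ t ∈ T₀, #{u ∈ U | r t u} :=
      (sum_card_bipartiteAbove_eq_sum_card_bipartiteBelow (r := r)).symm

theorem exists_card_filter_forall_not_le [DecidableEq ι] (ha : 0 < a)
    (h : ∀ u ∈ U, a ≤ #{t ∈ T₀ | r t u}) (m : ℕ) :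
    ∃ T : Finset ι, #T ≤ m ∧ (#{u ∈ U | ∀ t ∈ T, ¬ r t u} : ℝ) ≤ #U * (1 - a / #T₀) ^ m := by
  induction m generalizing U with
  | zero => exact ⟨∅, le_rfl, by simp⟩
  | succ m ih =>
    rcases U.eq_empty_or_nonempty with rfl | ⟨u₀, hu₀⟩
    · exact ⟨∅, Nat.zero_le _, by simp⟩
    have haT₀ : a ≤ #T₀ := (h u₀ hu₀).trans (card_filter_le _ _)
    have hT₀ : (0 : ℝ) < #T₀ := by exact_mod_cast ha.trans_le haT₀
    obtain ⟨t, -, ht⟩ := exists_mul_card_le_card_mul_card_filter (card_pos.1 (ha.trans_le haT₀)) h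
    obtain ⟨T, hT, hTU⟩ := ih (U := {u ∈ U | ¬ r t u}) fun u hu => h u (mem_filter.1 hu).1
    refine ⟨insert t T, (card_insert_le _ _).trans (by omega), ?_⟩
    have hfilter : {u ∈ U | ∀ t' ∈ insert t T, ¬ r t' u} =
        {u ∈ {u ∈ U | ¬ r t u} | ∀ t' ∈ T, ¬ r t' u} := by
      ext u
      simp [and_assoc]
    have hstep : (#{u ∈ U | ¬ r t u} : ℝ) ≤ #U * (1 - a / #T₀) := by
      have hsplit : (#{u ∈ U | r t u} + #{u ∈ U | ¬ r t u} : ℝ) = #U := by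
        exact_mod_cast card_filter_add_card_filter_not (s := U) (r t)
      have ht' : (#U * a / #T₀ : ℝ) ≤ #{u ∈ U | r t u} := by
        rw [div_le_iff₀ hT₀, mul_comm (#{u ∈ U | r t u} : ℝ)]
        exact_mod_cast (mul_comm (#U) a).trans_le ht
      rw [mul_one_sub, ← mul_div_assoc]
      linarith
    have hρ : (0 : ℝ) ≤ 1 - a / #T₀ := by
      rw [sub_nonneg, div_le_one hT₀]
      exact_mod_cast haT₀
    rw [hfilter, pow_succ', ← mul_assoc]
    exact hTU.trans (mul_le_mul_of_nonneg_right hstep (pow_nonneg hρ m))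

theorem exists_cover_of_card_lt_two_pow [DecidableEq ι] (ha : 0 < a)
    (h : ∀ u ∈ U, a ≤ #{t ∈ T₀ | r t u}) {ℓ m : ℕ} (hU : #U < 2 ^ ℓ) (hm : #T₀ * ℓ ≤ a * m) :
    ∃ T : Finset ι, #T ≤ m ∧ ∀ u ∈ U, ∃ t ∈ T, r t u := by
  rcases U.eq_empty_or_nonempty with rfl | ⟨u₀, hu₀⟩
  · exact ⟨∅, Nat.zero_le _, by simp⟩
  obtain ⟨T, hT, hTU⟩ := exists_card_filter_forall_not_le ha h m
  refine ⟨T, hT, fun u hu => ?_⟩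
  by_contra! hu'
  have hT₀ : (0 : ℝ) < #T₀ := by exact_mod_cast ha.trans_le ((h u₀ hu₀).trans (card_filter_le _ _))
  have hρ : (0 : ℝ) ≤ 1 - a / #T₀ := by
    rw [sub_nonneg, div_le_one hT₀]
    exact_mod_cast (h u₀ hu₀).trans (card_filter_le _ _)
  have hℓ : (ℓ : ℝ) ≤ a / #T₀ * m := by
    rw [div_mul_eq_mul_div, le_div_iff₀ hT₀]
    exact_mod_cast (mul_comm ℓ _).trans_le hm
  have : (#{u ∈ U | ∀ t ∈ T, ¬ r t u} : ℝ) < 1 :=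
    calc (#{u ∈ U | ∀ t ∈ T, ¬ r t u} : ℝ) ≤ #U * (1 - a / #T₀) ^ m := hTU
      _ ≤ #U * Real.exp (-(a / #T₀)) ^ m := by
        gcongr
        exact Real.one_sub_le_exp_neg _
      _ ≤ #U * Real.exp (-ℓ) := by
        rw [← Real.exp_nat_mul]
        gcongr
        linarith
      _ ≤ #U * (2 ^ ℓ)⁻¹ := by
        gcongr
        rw [Real.exp_neg, ← Real.exp_one_pow]
        gcongr
        linarith [Real.add_one_le_exp 1]
      _ < 1 := by
        rw [← div_eq_mul_inv, div_lt_one (by positivity)]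
        exact_mod_cast hU
  rw [Nat.cast_lt_one, card_eq_zero, filter_eq_empty_iff] at this
  exact this hu hu'

end Covering

theorem exists_translates_cover_Icc {A : Finset ℤ} {N ℓ m : ℕ} (hA : A ⊆ Icc 1 (N : ℤ))
    (hA₀ : A.Nonempty) (hN : N < 2 ^ ℓ) (hm : 2 * N * ℓ ≤ #A * m) :
    ∃ T : Finset ℤ, #T ≤ m ∧ ∀ u ∈ Icc 1 (N : ℤ), ∃ t ∈ T, u - t ∈ A := by
  refine exists_cover_of_card_lt_two_pow (T₀ := Icc (1 - N : ℤ) (N - 1))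
    (r := fun t u => u - t ∈ A) (card_pos.2 hA₀) (fun u hu => ?_) (by simpa using hN)
    (le_trans ?_ hm)
  · calc #A = #(A.image (u - ·)) := (card_image_of_injective _ sub_right_injective).symm
      _ ≤ _ := card_le_card fun t ht => by
        obtain ⟨a, ha, rfl⟩ := mem_image.1 ht
        have := mem_Icc.1 (hA ha)
        have := mem_Icc.1 hu
        simp only [mem_filter, mem_Icc, sub_sub_cancel]
        exact ⟨⟨by omega, by omega⟩, ha⟩
  · refine Nat.mul_le_mul_right _ ?_
    rw [Int.card_Icc]
    omega

theorem exists_isFree_cover_of_translates {γ δ : ℤ} {A T U : Finset ℤ} (hA : IsFree γ δ A)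
    (hT : ∀ u ∈ U, ∃ t ∈ T, u - t ∈ A) :
    ∃ S : Fin #T → Finset ℤ, (∀ i, S i ⊆ U ∧ IsFree γ δ (S i)) ∧ univ.biUnion S = U := by
  refine ⟨fun i => A.image (· + (T.equivFin.symm i : ℤ)) ∩ U,
    fun i => ⟨inter_subset_right, ?_⟩, ?_⟩
  · exact (hA.image_add_const _).mono (by rw [coe_inter, coe_image]; exact Set.inter_subset_left)
  · ext u
    simp only [mem_biUnion, mem_univ, true_and, mem_inter, mem_image]
    refine ⟨fun ⟨_, _, hu⟩ => hu, fun hu => ?_⟩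
    obtain ⟨t, ht, hut⟩ := hT u hu
    exact ⟨T.equivFin ⟨t, ht⟩, ⟨u - t, hut, by simp⟩, hu⟩

theorem exists_isFree_cover_Icc {g e N : ℕ} (hg : 0 < g) (he : 0 < e) (hN : N ≠ 0) :
    ∃ c ≤ 2 ^ ((g + e + 7) * (Nat.sqrt (Nat.log 2 N) + 1)), ∃ S : Fin c → Finset ℤ,
      (∀ i, S i ⊆ Icc 1 (N : ℤ) ∧ IsFree g e (S i)) ∧ univ.biUnion S = Icc 1 (N : ℤ) := by
  set ℓ := Nat.log 2 N
  set n := Nat.sqrt ℓ + 1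
  obtain ⟨A, hAN, hA, hcard⟩ := exists_isFree_subset_Icc_dense hg he hN
  have hA₀ : A.Nonempty := by
    rw [← card_pos]
    by_contra! h0
    simp_all
  obtain ⟨T, hT, hcover⟩ := exists_translates_cover_Icc hAN hA₀
    (Nat.lt_pow_succ_log_self one_lt_two N) (m := 2 ^ ((g + e + 4) * n + 1) * (ℓ + 1))
    (by rw [pow_succ]; nlinarith)
  obtain ⟨S, hS, hSU⟩ := exists_isFree_cover_of_translates hA hcover
  refine ⟨#T, hT.trans ?_, S, hS, hSU⟩
  have hℓ : ℓ + 1 ≤ 2 ^ n * 2 ^ n :=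
    (Nat.lt_succ_sqrt ℓ).trans_le (Nat.mul_le_mul n.lt_two_pow_self.le n.lt_two_pow_self.le)
  calc 2 ^ ((g + e + 4) * n + 1) * (ℓ + 1) ≤ 2 ^ ((g + e + 4) * n + 1) * (2 ^ n * 2 ^ n) := by
        gcongr
    _ ≤ 2 ^ ((g + e + 7) * n) := by
      rw [← pow_add, ← pow_add]
      exact Nat.pow_le_pow_right two_pos (by have : 1 ≤ n := Nat.le_add_left 1 _; nlinarith)

theorem two_pow_mul_nat_sqrt_log_succ_le {N : ℕ} (hN : 2 ≤ N) (k : ℕ) :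
    (2 : ℝ) ^ (k * (Nat.sqrt (Nat.log 2 N) + 1)) ≤ 2 ^ (2 * (k : ℝ) * √(Real.logb 2 N)) := by
  rw [← Real.rpow_natCast]
  refine Real.rpow_le_rpow_of_exponent_le one_le_two ?_
  have h1 : 1 ≤ Nat.sqrt (Nat.log 2 N) := Nat.le_sqrt.2 (Nat.le_log_of_pow_le one_lt_two hN)
  have h2 : (Nat.sqrt (Nat.log 2 N) : ℝ) ≤ √(Real.logb 2 N) :=
    Real.nat_sqrt_le_real_sqrt.trans (Real.sqrt_le_sqrt (Real.natLog_le_logb N 2))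
  have h1' : (1 : ℝ) ≤ Nat.sqrt (Nat.log 2 N) := by exact_mod_cast h1
  push_cast
  nlinarith [(k.cast_nonneg : (0 : ℝ) ≤ k)]

theorem stmt_7 (γ δ : ℤ) (hγ : 0 < γ) (hδ : 0 < δ) :
    ∃ C : ℝ, 0 < C ∧ ∀ N : ℕ, 2 ≤ N →
      ∃ c : ℕ, (c : ℝ) ≤ 2 ^ (C * Real.sqrt (Real.logb 2 N)) ∧
        ∃ S : Fin c → Finset ℤ,
          (∀ i, S i ⊆ Finset.Icc (1 : ℤ) (N : ℤ) ∧ IsFree γ δ ↑(S i)) ∧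
          Finset.univ.biUnion S = Finset.Icc (1 : ℤ) (N : ℤ) := by
  lift γ to ℕ using hγ.le
  lift δ to ℕ using hδ.le
  refine ⟨2 * ((γ + δ + 7 : ℕ) : ℝ), by positivity, fun N hN => ?_⟩
  obtain ⟨c, hc, S, hS, hSU⟩ :=
    exists_isFree_cover_Icc (Nat.cast_pos.1 hγ) (Nat.cast_pos.1 hδ) (by omega : N ≠ 0)
  refine ⟨c, ?_, S, hS, hSU⟩
  calc (c : ℝ) ≤ (2 : ℝ) ^ ((γ + δ + 7) * (Nat.sqrt (Nat.log 2 N) + 1)) := by exact_mod_cast hc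
    _ ≤ _ := two_pow_mul_nat_sqrt_log_succ_le hN _
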